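/- Let ε > 0, C > 0 and r > 0. Suppose that for all sequences (b_j)_{j≥1}, (d_k)_{k≥1}, (c_l)_{l≥2} of nonnegative real numbers with only finitely many nonzero terms and with c_l ≤ ε for every l ≥ 2, the inequality Σ_{l=2}^∞ c_l² (Σ_{j=1}^{l−1} b_j d_{l−j})² ≤ C · (Σ_{l=2}^∞ c_l² (l−1))^r · (Σ_{j=1}^∞ b_j²) · (Σ_{k=1}^∞ d_k²) holds. Then necessarily r ≥ 1/2. -/

import Mathlib

/-!
Test the inequality with `b = d = 1_{[1,N]}` and `c = ε · 1_{[2,N+1]}`. On the support of `c`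
the convolution `Σ_j b_j d_{l-j}` equals `l - 1`, so the left side is `ε² Σ_{m ≤ N} m² ≥ ε² N³/3`,
while `Σ c_l² (l-1) ≤ ε² N²` and `Σ b_j² = Σ d_k² = N`. Hence `ε² N³ ≤ 3C (εN)^{2r} N²`, i.e.
`(εN)^{1-2r} ≤ 3C/ε` for every `N ≥ 1`, which is impossible when `r < 1/2`.
-/

open Finset Filter

def ConvolutionInequality (ε C r : ℝ) : Prop :=
  ∀ b d c : ℕ → ℝ,
      (∀ j, 0 ≤ b j) → (∀ j, 0 ≤ d j) → (∀ l, 0 ≤ c l) →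
      b 0 = 0 → d 0 = 0 → c 0 = 0 → c 1 = 0 →
      (Function.support b).Finite → (Function.support d).Finite →
      (Function.support c).Finite →
      (∀ l, c l ≤ ε) →
      ∑' l : ℕ, (c l) ^ 2 * (∑ j ∈ Finset.Ico 1 l, b j * d (l - j)) ^ 2
        ≤ C * (∑' l : ℕ, (c l) ^ 2 * ((l : ℝ) - 1)) ^ r *
            (∑' j : ℕ, (b j) ^ 2) * (∑' k : ℕ, (d k) ^ 2)

lemma tsum_indicator_Ico_sq_mul (a : ℝ) (m n : ℕ) (f : ℕ → ℝ) :
    ∑' l, (Set.Ico m n).indicator (fun _ => a) l ^ 2 * f l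
      = a ^ 2 * ∑ k ∈ range (n - m), f (m + k) := by
  rw [tsum_eq_sum (s := Ico m n), sum_Ico_eq_sum_range, mul_sum]
  · refine sum_congr rfl fun k hk => ?_
    rw [Set.indicator_of_mem (by simp at hk ⊢; omega)]
  · intro l hl
    rw [Set.indicator_of_notMem (by simpa using hl)]
    ring

lemma sum_Ico_indicator_mul_indicator_sub (a : ℝ) {N l : ℕ} (hl : 1 ≤ l) (hlN : l ≤ N + 1) :
    ∑ j ∈ Ico 1 l, (Set.Ico 1 (N + 1)).indicator (fun _ => a) j *
        (Set.Ico 1 (N + 1)).indicator (fun _ => a) (l - j) = a ^ 2 * ((l : ℝ) - 1) := by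
  have hterm : ∀ j ∈ Ico 1 l, (Set.Ico 1 (N + 1)).indicator (fun _ => a) j *
      (Set.Ico 1 (N + 1)).indicator (fun _ => a) (l - j) = a ^ 2 := by
    intro j hj
    simp only [mem_Ico] at hj
    rw [Set.indicator_of_mem (by simp; omega), Set.indicator_of_mem (by simp; omega), sq]
  rw [sum_congr rfl hterm, sum_const, Nat.card_Ico, nsmul_eq_mul, Nat.cast_sub hl, mul_comm]
  simp

lemma cube_le_three_mul_sum_range_succ_sq (N : ℕ) :
    (N : ℝ) ^ 3 ≤ 3 * ∑ k ∈ range N, ((k : ℝ) + 1) ^ 2 := by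
  induction N with
  | zero => simp
  | succ n ih =>
    rw [sum_range_succ]
    push_cast
    nlinarith [(n.cast_nonneg : (0 : ℝ) ≤ n)]

lemma sum_range_succ_le_sq (N : ℕ) : ∑ k ∈ range N, ((k : ℝ) + 1) ≤ (N : ℝ) ^ 2 := by
  calc ∑ k ∈ range N, ((k : ℝ) + 1) ≤ ∑ _k ∈ range N, (N : ℝ) :=
        sum_le_sum fun k hk => by exact_mod_cast mem_range.1 hk
    _ = (N : ℝ) ^ 2 := by simp [sq]

lemma ConvolutionInequality.le_of_indicator_Ico {ε C r : ℝ} (h : ConvolutionInequality ε C r)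
    (hε : 0 ≤ ε) (N : ℕ) :
    ε ^ 2 * ∑ k ∈ range N, ((k : ℝ) + 1) ^ 2
      ≤ C * (ε ^ 2 * ∑ k ∈ range N, ((k : ℝ) + 1)) ^ r * N * N := by
  set b := (Set.Ico 1 (N + 1)).indicator (fun _ => (1 : ℝ))
  set c := (Set.Ico 2 (N + 2)).indicator (fun _ => ε)
  have hb : ∀ j, 0 ≤ b j := Set.indicator_nonneg fun _ _ => zero_le_one
  have hc : ∀ l, 0 ≤ c l := Set.indicator_nonneg fun _ _ => hε
  have hcε : ∀ l, c l ≤ ε := fun l => Set.indicator_apply_le' (fun _ => le_rfl) fun _ => hε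
  have hbfin : (Function.support b).Finite :=
    (Set.finite_Ico _ _).subset Set.support_indicator_subset
  have hcfin : (Function.support c).Finite :=
    (Set.finite_Ico _ _).subset Set.support_indicator_subset
  have hb2 : ∑' j, b j ^ 2 = N := by
    simpa using tsum_indicator_Ico_sq_mul 1 1 (N + 1) fun _ => 1
  have hconv : ∀ k ∈ range N,
      (∑ j ∈ Ico 1 (2 + k), b j * b (2 + k - j)) ^ 2 = ((k : ℝ) + 1) ^ 2 := by
    intro k hk
    rw [sum_Ico_indicator_mul_indicator_sub 1 (by omega) (by simp at hk; omega)]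
    push_cast
    ring
  have hweight : ∀ k ∈ range N, ((2 + k : ℕ) : ℝ) - 1 = (k : ℝ) + 1 := by
    intro k _
    push_cast
    ring
  have key := h b b c hb hb hc (by simp [b]) (by simp [b]) (by simp [c]) (by simp [c])
    hbfin hbfin hcfin hcε
  rwa [tsum_indicator_Ico_sq_mul, tsum_indicator_Ico_sq_mul, Nat.add_sub_cancel, hb2,
    sum_congr rfl hconv, sum_congr rfl hweight] at key

lemma ConvolutionInequality.mul_natCast_rpow_one_sub_le {ε C r : ℝ}
    (h : ConvolutionInequality ε C r)
    (hε : 0 < ε) (hC : 0 ≤ C) (hr : 0 ≤ r) {N : ℕ} (hN : 1 ≤ N) :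
    (ε * N) ^ (1 - 2 * r) ≤ 3 * C / ε := by
  have hN0 : (0 : ℝ) < N := by exact_mod_cast hN
  have hx : 0 < ε * N := by positivity
  have hpow : (ε ^ 2 * (N : ℝ) ^ 2) ^ r = (ε * N) ^ (2 * r) := by
    rw [← mul_pow, ← Real.rpow_natCast, ← Real.rpow_mul hx.le]
    norm_num
  have hchain : ε ^ 2 * ((N : ℝ) ^ 3 / 3) ≤ C * (ε * N) ^ (2 * r) * N * N :=
    calc ε ^ 2 * ((N : ℝ) ^ 3 / 3) ≤ ε ^ 2 * ∑ k ∈ range N, ((k : ℝ) + 1) ^ 2 := by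
          gcongr
          linarith [cube_le_three_mul_sum_range_succ_sq N]
      _ ≤ C * (ε ^ 2 * ∑ k ∈ range N, ((k : ℝ) + 1)) ^ r * N * N :=
          h.le_of_indicator_Ico hε.le N
      _ ≤ C * (ε ^ 2 * (N : ℝ) ^ 2) ^ r * N * N := by
          gcongr
          exact sum_range_succ_le_sq N
      _ = C * (ε * N) ^ (2 * r) * N * N := by rw [hpow]
  have hsmall : ε * (ε * N) ≤ 3 * C * (ε * N) ^ (2 * r) := by
    nlinarith [mul_pos hN0 hN0]
  rw [Real.rpow_sub hx, Real.rpow_one, div_le_div_iff₀ (by positivity) hε]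
  linarith

/-- The combinatorial core of the sharpness of the exponent `1/2` in Corollary 3
of Grafakos–He–Slavíková: if for some `ε, C > 0` and `r > 0` the inequality
`Σ_{l≥2} c_l² (Σ_{j=1}^{l-1} b_j d_{l-j})² ≤ C (Σ_{l≥2} c_l²(l-1))^r (Σ_j b_j²)(Σ_k d_k²)`
holds for all finitely supported sequences of nonnegative reals with `c_l ≤ ε`,
then `r ≥ 1/2`.  Sequences are indexed so that `b_j, d_k` are supported in
`j, k ≥ 1` and `c_l` in `l ≥ 2`. -/
theorem statement18 (ε C r : ℝ) (hε : 0 < ε) (hC : 0 < C) (hr : 0 < r)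
    (H : ∀ b d c : ℕ → ℝ,
      (∀ j, 0 ≤ b j) → (∀ j, 0 ≤ d j) → (∀ l, 0 ≤ c l) →
      b 0 = 0 → d 0 = 0 → c 0 = 0 → c 1 = 0 →
      (Function.support b).Finite → (Function.support d).Finite →
      (Function.support c).Finite →
      (∀ l, c l ≤ ε) →
      ∑' l : ℕ, (c l) ^ 2 * (∑ j ∈ Finset.Ico 1 l, b j * d (l - j)) ^ 2
        ≤ C * (∑' l : ℕ, (c l) ^ 2 * ((l : ℝ) - 1)) ^ r *
            (∑' j : ℕ, (b j) ^ 2) * (∑' k : ℕ, (d k) ^ 2)) :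
    1 / 2 ≤ r := by
  by_contra! hr2
  have hgrow : Tendsto (fun N : ℕ => (ε * N) ^ (1 - 2 * r)) atTop atTop :=
    (tendsto_rpow_atTop (by linarith)).comp
      (tendsto_natCast_atTop_atTop.const_mul_atTop hε)
  obtain ⟨N, hbig, hN⟩ := ((hgrow.eventually_gt_atTop (3 * C / ε)).and
    (eventually_ge_atTop 1)).exists
  exact (ConvolutionInequality.mul_natCast_rpow_one_sub_le H hε hC.le hr.le hN).not_gt hbig
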